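/- Let n ≥ 2 and let f ∈ 𝔽₃[x₁,…,xₙ] be a nonzero polynomial of total degree d with 2n ≥ d, which does not vanish identically on 𝔽₃ⁿ. Then f is nonzero at at least 3^((2n-d)/2) points of 𝔽₃ⁿ. -/

import Mathlib

/-!
Over a field with `q` elements, `a ^ q = a`, so every exponent can be cut down to at most `q - 1`
without changing the polynomial function or raising the degree; it therefore suffices to treat
polynomials of degree at most `q - 1` in each variable. For those, induct on the number of
variables (Alon–Füredi): write `f` as a polynomial of degree `k ≤ q - 1` in `x₀` with leading
coefficient `g` in the remaining variables. Above each point where `g` does not vanish, `f` restricts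
to a nonzero univariate polynomial of degree at most `k`, which is nonzero at at least `q - k`
points; so `N(f) ≥ (q - k) N(g)`, where `N` counts non-zeros. The induction closes because
`q ^ (1 - k / (q - 1)) ≤ q - k`, which is weighted AM–GM of `q` and `1`.
-/

open MvPolynomial Finset

theorem Real.rpow_one_sub_div_le {q k : ℝ} (hq : 1 < q) (hk₀ : 0 ≤ k) (hk : k ≤ q - 1) :
    q ^ (1 - k / (q - 1)) ≤ q - k := by
  have hq₁ : 0 < q - 1 := by linarith
  have amgm := Real.geom_mean_le_arith_mean2_weighted (p₁ := q) (p₂ := 1)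
    (sub_nonneg.mpr ((div_le_one hq₁).mpr hk)) (div_nonneg hk₀ hq₁.le) (by linarith) zero_le_one
    (sub_add_cancel 1 (k / (q - 1)))
  calc q ^ (1 - k / (q - 1))
      = q ^ (1 - k / (q - 1)) * 1 ^ (k / (q - 1)) := by rw [Real.one_rpow, mul_one]
    _ ≤ (1 - k / (q - 1)) * q + k / (q - 1) * 1 := amgm
    _ = q - k := by field_simp; ring

theorem Fin.card_filter_univ_eq_sum_card_filter_cons {α : Type*} [Fintype α] {n : ℕ}
    (p : (Fin (n + 1) → α) → Prop) [DecidablePred p] :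
    #{x | p x} = ∑ y : Fin n → α, #{a | p (Fin.cons a y)} := by
  simp only [card_filter]
  rw [← (Fin.consEquiv fun _ => α).sum_comp, Fintype.sum_prod_type_right]
  rfl

theorem Polynomial.card_sub_natDegree_le_card_eval_ne_zero {K : Type*} [Field K] [Fintype K]
    [DecidableEq K] {p : Polynomial K} (hp : p ≠ 0) :
    Fintype.card K - p.natDegree ≤ #{a | p.eval a ≠ 0} := by
  have hroots : #{a | p.eval a = 0} ≤ p.natDegree :=
    card_le_degree_of_subset_roots fun a ha => by simp_all
  have := card_filter_add_card_filter_not (s := univ) fun a => p.eval a = 0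
  rw [card_univ] at this
  simp only [ne_eq]
  omega

-- the least `e` with `a ^ e = a ^ i` for every `a` in a field with `q` elements
def reducedExp (q i : ℕ) : ℕ := if i = 0 then 0 else (i - 1) % (q - 1) + 1

theorem reducedExp_zero (q : ℕ) : reducedExp q 0 = 0 := rfl

theorem reducedExp_le (q i : ℕ) : reducedExp q i ≤ i := by
  unfold reducedExp
  split_ifs
  · omega
  · have := Nat.mod_le (i - 1) (q - 1)
    omega

theorem reducedExp_le_sub_one {q : ℕ} (hq : 1 < q) (i : ℕ) : reducedExp q i ≤ q - 1 := by
  unfold reducedExp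
  split_ifs
  · omega
  · have := Nat.mod_lt (i - 1) (show 0 < q - 1 by omega)
    omega

section FiniteField

variable {K : Type*} [Field K] [Fintype K]

theorem FiniteField.pow_reducedExp (a : K) (i : ℕ) :
    a ^ reducedExp (Fintype.card K) i = a ^ i := by
  unfold reducedExp
  split_ifs with hi
  · rw [hi]
  by_cases ha : a = 0
  · simp [ha, hi]
  obtain ⟨j, rfl⟩ := Nat.exists_eq_add_one_of_ne_zero hi
  rw [Nat.add_sub_cancel, pow_succ, pow_succ]
  conv_rhs => rw [← Nat.div_add_mod j (Fintype.card K - 1), pow_add, pow_mul,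
    FiniteField.pow_card_sub_one_eq_one a ha, one_pow, one_mul]

namespace MvPolynomial

variable {σ : Type*}

noncomputable def reduceExponents (f : MvPolynomial σ K) : MvPolynomial σ K :=
  ∑ m ∈ f.support,
    monomial (m.mapRange (reducedExp (Fintype.card K)) (reducedExp_zero _)) (coeff m f)

theorem eval_reduceExponents (f : MvPolynomial σ K) (x : σ → K) :
    eval x (reduceExponents f) = eval x f := by
  conv_rhs => rw [f.as_sum]
  rw [reduceExponents, map_sum, map_sum]
  refine sum_congr rfl fun m _ => ?_
  rw [eval_monomial, eval_monomial, Finsupp.prod_mapRange_index (by simp)]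
  congr 1
  exact Finsupp.prod_congr fun i _ => FiniteField.pow_reducedExp (x i) (m i)

theorem totalDegree_reduceExponents_le (f : MvPolynomial σ K) :
    (reduceExponents f).totalDegree ≤ f.totalDegree := by
  refine (totalDegree_finsetSum _ _).trans (Finset.sup_le fun m hm => ?_)
  refine (totalDegree_monomial_le _ _).trans (le_trans ?_ (le_totalDegree hm))
  rw [Finsupp.sum_mapRange_index fun _ => rfl]
  exact Finsupp.sum_le_sum fun i _ => reducedExp_le _ _

theorem reduceExponents_mem_restrictDegree (f : MvPolynomial σ K) :
    reduceExponents f ∈ restrictDegree σ K (Fintype.card K - 1) := by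
  classical
  rw [mem_restrictDegree]
  intro m' hm' i
  obtain ⟨m, -, hm⟩ := mem_biUnion.mp (support_sum hm')
  rw [mem_singleton.mp (support_monomial_subset hm), Finsupp.mapRange_apply]
  exact reducedExp_le_sub_one Fintype.one_lt_card _

theorem card_sub_natDegree_mul_le_card_eval_ne_zero [DecidableEq K] {n : ℕ}
    (f : MvPolynomial (Fin (n + 1)) K) :
    (Fintype.card K - (finSuccEquiv K n f).natDegree) *
        #{y | eval y (finSuccEquiv K n f).leadingCoeff ≠ 0} ≤ #{x | eval x f ≠ 0} := by
  set P := finSuccEquiv K n f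
  have fiber : ∀ y, eval y P.leadingCoeff ≠ 0 →
      Fintype.card K - P.natDegree ≤ #{a | eval (Fin.cons a y) f ≠ 0} := by
    intro y hy
    set p := P.map (eval y)
    have hp : p.coeff P.natDegree ≠ 0 := by rwa [Polynomial.coeff_map]
    have hp₀ : p ≠ 0 := fun h => hp (by rw [h, Polynomial.coeff_zero])
    have hdeg : p.natDegree ≤ P.natDegree := Polynomial.natDegree_map_le
    have := Polynomial.card_sub_natDegree_le_card_eval_ne_zero hp₀
    simp only [eval_eq_eval_mv_eval']
    exact (Nat.sub_le_sub_left hdeg _).trans this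
  rw [Fin.card_filter_univ_eq_sum_card_filter_cons, mul_comm, ← smul_eq_mul, ← sum_const]
  calc ∑ _y ∈ {y | eval y P.leadingCoeff ≠ 0}, (Fintype.card K - P.natDegree)
      ≤ ∑ y ∈ {y | eval y P.leadingCoeff ≠ 0}, #{a | eval (Fin.cons a y) f ≠ 0} :=
        sum_le_sum fun y hy => fiber y (mem_filter.mp hy).2
    _ ≤ ∑ y, #{a | eval (Fin.cons a y) f ≠ 0} := sum_le_sum_of_subset (subset_univ _)

theorem rpow_le_card_eval_ne_zero_of_mem_restrictDegree [DecidableEq K] {n : ℕ}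
    {f : MvPolynomial (Fin n) K} (hf : f ≠ 0)
    (hfK : f ∈ restrictDegree (Fin n) K (Fintype.card K - 1)) :
    (Fintype.card K : ℝ) ^ ((n : ℝ) - f.totalDegree / (Fintype.card K - 1)) ≤
      #{x | eval x f ≠ 0} := by
  set q := Fintype.card K
  have hq : 1 < q := Fintype.one_lt_card
  induction n with
  | zero =>
    obtain ⟨c, rfl⟩ : ∃ c, f = C c := ⟨_, f.eq_C_of_isEmpty⟩
    have hc : c ≠ 0 := by rintro rfl; exact hf (map_zero C)
    simp [hc]
  | succ n ih =>
    rw [mem_restrictDegree] at hfK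
    set P := finSuccEquiv K n f
    set k := P.natDegree
    set g := P.leadingCoeff
    have hP : P ≠ 0 := (map_ne_zero_iff _ (finSuccEquiv K n).injective).mpr hf
    have hg : g ≠ 0 := Polynomial.leadingCoeff_ne_zero.mpr hP
    have hk : k ≤ q - 1 := by
      rw [show k = degreeOf 0 f from natDegree_finSuccEquiv f]
      exact degreeOf_le_iff.mpr fun m hm => hfK m hm 0
    have hgK : g ∈ restrictDegree (Fin n) K (q - 1) := by
      rw [mem_restrictDegree]
      intro m hm i
      simpa using hfK _ (mem_support_coeff_finSuccEquiv.mp hm) i.succ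
    have hdeg : g.totalDegree + k ≤ f.totalDegree := totalDegree_coeff_finSuccEquiv_add_le f _ hg
    have hq₁ : (0 : ℝ) < q - 1 := by rw [sub_pos]; exact_mod_cast hq
    have hkq : (k : ℝ) ≤ q - 1 := by
      rw [le_sub_iff_add_le]; exact_mod_cast Nat.add_le_of_le_sub hq.le hk
    calc (q : ℝ) ^ (((n + 1 : ℕ) : ℝ) - f.totalDegree / (q - 1))
        ≤ (q : ℝ) ^ (((n : ℝ) - g.totalDegree / (q - 1)) + (1 - k / (q - 1))) := by
          refine Real.rpow_le_rpow_of_exponent_le (by exact_mod_cast hq.le) ?_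
          have : ((g.totalDegree + k : ℕ) : ℝ) ≤ f.totalDegree := by exact_mod_cast hdeg
          push_cast at this ⊢
          rw [← div_le_div_iff_of_pos_right hq₁] at this
          linarith [add_div (g.totalDegree : ℝ) k (q - 1)]
      _ = (q : ℝ) ^ ((n : ℝ) - g.totalDegree / (q - 1)) * (q : ℝ) ^ (1 - (k : ℝ) / (q - 1)) :=
          Real.rpow_add (by positivity) _ _
      _ ≤ #{y | eval y g ≠ 0} * ((q : ℝ) - k) :=
          mul_le_mul (ih hg hgK) (Real.rpow_one_sub_div_le (by exact_mod_cast hq) k.cast_nonneg hkq)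
            (by positivity) (by positivity)
      _ = (((q - k) * #{y | eval y g ≠ 0} : ℕ) : ℝ) := by
          rw [Nat.cast_mul, Nat.cast_sub (hk.trans (Nat.sub_le q 1)), mul_comm]
      _ ≤ #{x | eval x f ≠ 0} := by exact_mod_cast card_sub_natDegree_mul_le_card_eval_ne_zero f

theorem rpow_le_card_eval_ne_zero [DecidableEq K] {n : ℕ} {f : MvPolynomial (Fin n) K}
    (hf : ∃ x, eval x f ≠ 0) :
    (Fintype.card K : ℝ) ^ ((n : ℝ) - f.totalDegree / (Fintype.card K - 1)) ≤
      #{x | eval x f ≠ 0} := by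
  obtain ⟨x₀, hx₀⟩ := hf
  have hr : reduceExponents f ≠ 0 := fun h => hx₀ (by rw [← eval_reduceExponents, h, map_zero])
  have hq : (1 : ℝ) ≤ Fintype.card K := by exact_mod_cast Fintype.one_lt_card.le
  calc (Fintype.card K : ℝ) ^ ((n : ℝ) - f.totalDegree / (Fintype.card K - 1))
      ≤ (Fintype.card K : ℝ) ^
          ((n : ℝ) - (reduceExponents f).totalDegree / (Fintype.card K - 1)) := by
        gcongr
        exact totalDegree_reduceExponents_le f
    _ ≤ #{x | eval x (reduceExponents f) ≠ 0} :=
        rpow_le_card_eval_ne_zero_of_mem_restrictDegree hr (reduceExponents_mem_restrictDegree f)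
    _ = #{x | eval x f ≠ 0} := by simp only [eval_reduceExponents]

end MvPolynomial
end FiniteField

theorem stmt_16_general {n : ℕ} (f : MvPolynomial (Fin n) (ZMod 3))
    (d : ℕ) (hd : f.totalDegree = d)
    (hnv : ∃ x : Fin n → ZMod 3, MvPolynomial.eval x f ≠ 0) :
    (3 : ℝ) ^ ((2 * (n : ℝ) - d) / 2) ≤
      ({x : Fin n → ZMod 3 | MvPolynomial.eval x f ≠ 0}).ncard := by
  have h := rpow_le_card_eval_ne_zero hnv
  rw [ZMod.card, hd] at h
  rw [← coe_filter_univ, Set.ncard_coe_finset]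
  convert h using 2
  norm_num
  ring

theorem stmt_16 {n : ℕ} (hn : 2 ≤ n) (f : MvPolynomial (Fin n) (ZMod 3))
    (hf : f ≠ 0) (d : ℕ) (hd : f.totalDegree = d) (hnd : 2 * n ≥ d)
    (hnv : ∃ x : Fin n → ZMod 3, MvPolynomial.eval x f ≠ 0) :
    (3 : ℝ) ^ ((2 * (n : ℝ) - d) / 2) ≤
      ({x : Fin n → ZMod 3 | MvPolynomial.eval x f ≠ 0}).ncard :=
  stmt_16_general f d hd hnv
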